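/- Fix an integer k ≥ 1, and let B_k be the graph on vertex set {c_1,…,c_{k+1}} ⊔ {z_1,…,z_{k−1}} (where the second set is empty if k = 1) in which {c_1,…,c_{k+1}} induces a complete graph, {z_1,…,z_{k−1}} is an independent set, and for each 1 ≤ j ≤ k−1 the neighborhood of z_j is exactly {c_1,…,c_j}. Then the independence polynomial of B_k satisfies P_{B_k}(x) = 2(1+x)^k − 1. -/

import Mathlib

attribute [local instance] Classical.propDecidable

/-- `s` is an independent set of vertices of `G`. -/
def IsIndep {V : Type*} (G : SimpleGraph V) (s : Finset V) : Prop :=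
  ∀ v ∈ s, ∀ w ∈ s, ¬ G.Adj v w

/-- The independence polynomial `P_G(x) = ∑ g_i x^i`. -/
noncomputable def indepPoly {V : Type*} [Fintype V] (G : SimpleGraph V) : Polynomial ℤ :=
  ∑ s ∈ Finset.univ.filter (fun s : Finset V => IsIndep G s), Polynomial.X ^ s.card

/-- The defining relation of the split graph `B_k`: the vertices `c_1,…,c_{k+1}`
(0-indexed: `Sum.inl a`, `a : Fin (k+1)`) form a clique, the vertices `z_1,…,z_{k-1}`
(0-indexed: `Sum.inr j`, `j : Fin (k-1)`) form an independent set, and the neighborhood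
of `z_{j+1}` is exactly `{c_1,…,c_{j+1}}`, i.e. `c_a ~ z_j` iff `a ≤ j` (0-indexed). -/
def BRel (k : ℕ) : (Fin (k + 1) ⊕ Fin (k - 1)) → (Fin (k + 1) ⊕ Fin (k - 1)) → Prop
  | Sum.inl a, Sum.inl b => a ≠ b
  | Sum.inl a, Sum.inr j => (a : ℕ) ≤ (j : ℕ)
  | _, _ => False

/-- The graph `B_k` with nested neighborhoods. -/
noncomputable def Bgraph (k : ℕ) : SimpleGraph (Fin (k + 1) ⊕ Fin (k - 1)) :=
  SimpleGraph.fromRel (BRel k)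

section Aux
open Polynomial Finset

lemma indep_iff (k : ℕ) (s : Finset (Fin (k + 1) ⊕ Fin (k - 1))) :
    IsIndep (Bgraph k) s ↔
      ((∀ a ∈ s.toLeft, ∀ b ∈ s.toLeft, a = b) ∧
        ∀ a ∈ s.toLeft, ∀ j ∈ s.toRight, (j : ℕ) < (a : ℕ)) := by
  constructor
  · intro h
    constructor
    · intro a ha b hb
      by_contra hab
      exact h _ (Finset.mem_toLeft.mp ha) _ (Finset.mem_toLeft.mp hb)
        ⟨by simp [hab], Or.inl hab⟩
    · intro a ha j hj
      by_contra hle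
      exact h _ (Finset.mem_toLeft.mp ha) _ (Finset.mem_toRight.mp hj)
        ⟨by simp, Or.inl (Nat.le_of_not_lt hle)⟩
  · rintro ⟨h1, h2⟩ v hv w hw ⟨hne, hrel⟩
    match v, w with
    | Sum.inl a, Sum.inl b =>
      exact hne (by rw [h1 a (Finset.mem_toLeft.mpr hv) b (Finset.mem_toLeft.mpr hw)])
    | Sum.inl a, Sum.inr j =>
      have := h2 a (Finset.mem_toLeft.mpr hv) j (Finset.mem_toRight.mpr hw)
      rcases hrel with h | h
      · exact absurd (show (a:ℕ) ≤ j from h) (Nat.not_le.mpr this)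
      · exact h
    | Sum.inr j, Sum.inl a =>
      have := h2 a (Finset.mem_toLeft.mpr hw) j (Finset.mem_toRight.mpr hv)
      rcases hrel with h | h
      · exact h
      · exact absurd (show (a:ℕ) ≤ j from h) (Nat.not_le.mpr this)
    | Sum.inr i, Sum.inr j => rcases hrel with h | h <;> exact h

lemma sum_pow_card {α : Type*} [DecidableEq α] (T : Finset α) :
    ∑ B ∈ T.powerset, (X : ℤ[X]) ^ B.card = (1 + X) ^ T.card := by
  have := Finset.prod_add (fun _ : α => (X : ℤ[X])) (fun _ => 1) T
  simp only [Finset.prod_const, Finset.prod_const_one, mul_one, one_pow] at this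
  rw [add_comm] at this
  rw [this]

lemma card_filter_val_lt (m n : ℕ) :
    (Finset.univ.filter (fun j : Fin m => (j : ℕ) < n)).card = min n m := by
  rw [← Finset.card_range (min n m)]
  apply Finset.card_nbij (fun j : Fin m => (j : ℕ))
  · intro j hj
    replace hj : (j : ℕ) < n := by simpa using hj
    simp [lt_min_iff, hj, j.is_lt]
  · exact Fin.val_injective.injOn
  · intro x hx
    simp only [Finset.coe_range, Set.mem_Iio, lt_min_iff] at hx
    exact ⟨⟨x, hx.2⟩, by simp [hx.1], rfl⟩


def condP {n : ℕ} (A : Finset (Fin n)) : Prop := ∀ a ∈ A, ∀ b ∈ A, a = b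
def condQ {n r : ℕ} (A : Finset (Fin n)) (B : Finset (Fin r)) : Prop :=
  ∀ a ∈ A, ∀ j ∈ B, (j : ℕ) < (a : ℕ)


/-- `P_{B_k}(x) = 2 (1+x)^k - 1`. -/
theorem indepPoly_Bgraph (k : ℕ) (hk : 1 ≤ k) :
    indepPoly (Bgraph k) = 2 * (1 + Polynomial.X) ^ k - 1 := by
  obtain ⟨m, rfl⟩ : ∃ m, k = m + 1 := ⟨k - 1, (Nat.succ_pred_eq_of_pos hk).symm⟩
  clear hk
  set V := Fin (m + 1 + 1) ⊕ Fin (m + 1 - 1)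
  let e : Finset (Fin (m + 1 + 1)) × Finset (Fin (m + 1 - 1)) ≃ Finset V :=
    { toFun := fun p => p.1.disjSum p.2
      invFun := fun s => (s.toLeft, s.toRight)
      left_inv := fun p => by simp
      right_inv := fun s => by simp [Finset.toLeft_disjSum_toRight] }
  have step1 : indepPoly (Bgraph (m + 1)) =
      ∑ A : Finset (Fin (m + 1 + 1)), ∑ B : Finset (Fin (m + 1 - 1)),
        if condP A ∧ condQ A B then (X : ℤ[X]) ^ (A.card + B.card) else 0 := by
    rw [indepPoly, Finset.sum_filter, ← Equiv.sum_comp e, Fintype.sum_prod_type]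
    apply Finset.sum_congr rfl
    intro A _
    apply Finset.sum_congr rfl
    intro B _
    simp only [e, Equiv.coe_fn_mk, indep_iff, Finset.toLeft_disjSum,
      Finset.toRight_disjSum, Finset.card_disjSum, condP, condQ]
    rcases Classical.em ((∀ a ∈ A, ∀ b ∈ A, a = b) ∧ ∀ a ∈ A, ∀ j ∈ B, (j:ℕ) < (a:ℕ)) with h | h
    · rw [if_pos h]; exact (if_pos h).symm
    · rw [if_neg h]; exact (if_neg h).symm
  rw [step1]
  have hS : (Finset.univ.filter (fun A : Finset (Fin (m + 1 + 1)) => condP A)) =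
      insert ∅ (Finset.univ.image (fun a : Fin (m + 1 + 1) => {a})) := by
    ext A
    simp only [Finset.mem_filter, Finset.mem_univ, true_and, Finset.mem_insert,
      Finset.mem_image, exists_true_left]
    constructor
    · intro h
      have : A.card ≤ 1 := Finset.card_le_one.mpr (fun a ha b hb => h a ha b hb)
      rcases Finset.card_le_one_iff_subset_singleton.mp this with ⟨x, hx⟩
      rcases Finset.subset_singleton_iff.mp hx with h | h
      · exact Or.inl h
      · exact Or.inr ⟨x, h.symm⟩
    · rintro (rfl | ⟨a, _, rfl⟩) <;> intro x hx y hy <;> simp_all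
  have step2 : (∑ A : Finset (Fin (m + 1 + 1)), ∑ B : Finset (Fin (m + 1 - 1)),
        if condP A ∧ condQ A B then (X : ℤ[X]) ^ (A.card + B.card) else 0) =
      ∑ A ∈ insert ∅ (Finset.univ.image (fun a : Fin (m + 1 + 1) => {a})),
        ∑ B : Finset (Fin (m + 1 - 1)),
        if condQ A B then (X : ℤ[X]) ^ (A.card + B.card) else 0 := by
    rw [← hS, Finset.sum_filter]
    apply Finset.sum_congr rfl
    intro A _
    by_cases h1 : condP A
    · simp [h1]
    · rw [if_neg h1]
      apply Finset.sum_eq_zero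
      intro B _
      rw [if_neg (fun hc => h1 hc.1)]
  rw [step2]
  have hnotmem : (∅ : Finset (Fin (m + 1 + 1))) ∉
      Finset.univ.image (fun a : Fin (m + 1 + 1) => ({a} : Finset (Fin (m + 1 + 1)))) := by
    simp
  rw [Finset.sum_insert hnotmem,
    Finset.sum_image (fun a _ b _ h => Finset.singleton_injective h)]
  have hempty : (∑ B : Finset (Fin (m + 1 - 1)),
      if condQ (∅ : Finset (Fin (m+1+1))) B
        then (X : ℤ[X]) ^ ((∅ : Finset (Fin (m+1+1))).card + B.card) else 0) =
      (1 + X) ^ m := by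
    have ht : ∀ B : Finset (Fin (m + 1 - 1)), condQ (∅ : Finset (Fin (m+1+1))) B := by
      intro B a ha; simp at ha
    have h2 : (∑ B : Finset (Fin (m + 1 - 1)),
        if condQ (∅ : Finset (Fin (m+1+1))) B
          then (X : ℤ[X]) ^ ((∅ : Finset (Fin (m+1+1))).card + B.card) else 0) =
        ∑ B : Finset (Fin (m + 1 - 1)), (X : ℤ[X]) ^ B.card :=
      Finset.sum_congr rfl (fun B _ => by rw [if_pos (ht B), Finset.card_empty, zero_add])
    rw [h2, ← Finset.powerset_univ, sum_pow_card, Finset.card_univ, Fintype.card_fin]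
    norm_num
  rw [hempty]
  have hsingle : ∀ a : Fin (m + 1 + 1),
      (∑ B : Finset (Fin (m + 1 - 1)),
        if condQ ({a} : Finset (Fin (m+1+1))) B
          then (X : ℤ[X]) ^ (({a} : Finset (Fin (m+1+1))).card + B.card) else 0) =
      X * (1 + X) ^ (min (a : ℕ) m) := by
    intro a
    have hiff : ∀ B : Finset (Fin (m + 1 - 1)),
        condQ ({a} : Finset (Fin (m+1+1))) B ↔
        B ⊆ Finset.univ.filter (fun j : Fin (m + 1 - 1) => (j : ℕ) < (a : ℕ)) := by
      intro B
      constructor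
      · intro h j hj
        simp only [Finset.mem_filter, Finset.mem_univ, true_and]
        exact h a (by simp) j hj
      · intro h x hx j hj
        rw [Finset.mem_singleton] at hx
        subst hx
        simpa using Finset.mem_filter.mp (h hj)
    calc (∑ B : Finset (Fin (m + 1 - 1)),
        if condQ ({a} : Finset (Fin (m+1+1))) B
          then (X : ℤ[X]) ^ (({a} : Finset (Fin (m+1+1))).card + B.card) else 0)
        = ∑ B ∈ (Finset.univ.filter (fun j : Fin (m + 1 - 1) => (j : ℕ) < (a : ℕ))).powerset,
            (X : ℤ[X]) ^ (1 + B.card) := by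
          rw [← Finset.sum_filter]
          apply Finset.sum_congr
          · ext B
            simp only [Finset.mem_filter, Finset.mem_univ, true_and, Finset.mem_powerset]
            exact hiff B
          · intro B _; rw [Finset.card_singleton]
      _ = X * (1 + X) ^ (min (a : ℕ) m) := by
          simp only [pow_add, pow_one]
          rw [← Finset.mul_sum, sum_pow_card, card_filter_val_lt]
          norm_num
  simp only [hsingle]
  have hfin : (∑ a : Fin (m + 1 + 1), (X : ℤ[X]) * (1 + X) ^ (min (a : ℕ) m)) =
      (∑ a ∈ Finset.range (m + 1), (X : ℤ[X]) * (1 + X) ^ a) + X * (1 + X) ^ m := by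
    rw [Fin.sum_univ_eq_sum_range (fun a => (X : ℤ[X]) * (1 + X) ^ (min a m)),
      Finset.sum_range_succ]
    congr 1
    · apply Finset.sum_congr rfl
      intro a ha
      rw [Nat.min_eq_left (Nat.lt_succ_iff.mp (Finset.mem_range.mp ha))]
    · rw [Nat.min_eq_right (Nat.le_succ m)]
  rw [hfin]
  have hg : (∑ i ∈ Finset.range (m + 1), (1 + X : ℤ[X]) ^ i) * ((1 + X) - 1) =
      (1 + X) ^ (m + 1) - 1 := geom_sum_mul _ _
  have hg' : (∑ a ∈ Finset.range (m + 1), (X : ℤ[X]) * (1 + X) ^ a) =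
      (1 + X) ^ (m + 1) - 1 := by
    rw [← hg, Finset.sum_mul]
    apply Finset.sum_congr rfl
    intro i _
    ring
  rw [hg']
  ring

end Aux
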